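/- If X is a centered σ²-sub-Gaussian random variable, then for every λ with 0 ≤ λ ≤ 1/(4σ²), E exp(λ(X² - E X²)) ≤ exp(10 λ² σ⁴). -/

import Mathlib

/-!
Expanding the exponential, `E exp(l X²) = 1 + l E X² + ∑_{k ≥ 2} l^k E X^{2k} / k!`.
Comparing `(aX)^{2k} / (2k)!` with `cosh (aX)` and taking `a² = 2k / σ²` gives
`E X^{2k} ≤ (2k)! (e σ² / 2k)^k`, and since Stirling's sequence `n! / (√(2n) (n/e)^n)` is
antitone this is at most `√2 k! (2σ²)^k`. The tail is therefore geometric with ratio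
`2 l σ² ≤ 1/2`, of size `O(l² σ⁴)`, while the factor `exp (-l E X²)` absorbs `1 + l E X²`.
-/

open MeasureTheory ProbabilityTheory Real
open scoped NNReal Nat

lemma factorial_two_mul_mul_exp_one_pow_le (k : ℕ) :
    ((2 * k)! : ℝ) * exp 1 ^ k ≤ √2 * 2 ^ k * k ! * (2 * k) ^ k := by
  rcases Nat.eq_zero_or_pos k with rfl | hk
  · simp [one_le_sqrt]
  have hanti : Stirling.stirlingSeq (2 * k) ≤ Stirling.stirlingSeq k := by
    obtain ⟨j, rfl⟩ : ∃ j, k = j + 1 := ⟨k - 1, by omega⟩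
    exact Stirling.stirlingSeq'_antitone (show j ≤ 2 * j + 1 by omega)
  have hA : (0 : ℝ) < √(2 * k) * (k / exp 1) ^ k := by positivity
  have hB : (0 : ℝ) < √(2 * (2 * k)) * (2 * k / exp 1) ^ (2 * k) := by positivity
  have hfk : (k ! : ℝ) = Stirling.stirlingSeq k * (√(2 * k) * (k / exp 1) ^ k) := by
    rw [Stirling.stirlingSeq, div_mul_cancel₀ _ hA.ne']
  have hf2k : ((2 * k)! : ℝ) =
      Stirling.stirlingSeq (2 * k) * (√(2 * (2 * k)) * (2 * k / exp 1) ^ (2 * k)) := by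
    rw [Stirling.stirlingSeq, Nat.cast_mul, Nat.cast_ofNat, div_mul_cancel₀ _ hB.ne']
  have hsqrt : √(2 * (2 * k) : ℝ) = √2 * √(2 * k) := by
    rw [← sqrt_mul zero_le_two]
  have hscale : √2 * √(2 * k) * (2 * k / exp 1) ^ (2 * k) * exp 1 ^ k
      = √2 * 2 ^ k * (√(2 * k) * (k / exp 1) ^ k) * (2 * k) ^ k := by
    rw [div_pow, div_pow, two_mul k, pow_add, pow_add]
    field_simp
    ring
  rw [hfk, hf2k, hsqrt]
  calc _ = Stirling.stirlingSeq (2 * k) *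
          (√2 * √(2 * k) * (2 * k / exp 1) ^ (2 * k) * exp 1 ^ k) := by ring
    _ ≤ Stirling.stirlingSeq k * (√2 * √(2 * k) * (2 * k / exp 1) ^ (2 * k) * exp 1 ^ k) := by
        gcongr
    _ = _ := by rw [hscale]; ring

lemma pow_two_mul_div_factorial_le_cosh (x : ℝ) (k : ℕ) : x ^ (2 * k) / (2 * k)! ≤ cosh x :=
  le_hasSum (hasSum_cosh x) k fun j _ => by positivity [(even_two_mul j).pow_nonneg x]

lemma HasSum.le_add_add_of_le_geometric {t : ℕ → ℝ} {s C r : ℝ} (hs : HasSum t s)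
    (hr0 : 0 ≤ r) (hr1 : r < 1) (ht : ∀ n, t (n + 2) ≤ C * r ^ (n + 2)) :
    s ≤ t 0 + t 1 + C * r ^ 2 / (1 - r) := by
  have ht' (n : ℕ) : t (n + 2) ≤ C * r ^ 2 * r ^ n := (ht n).trans_eq (by ring)
  have := hasSum_le ht' ((hasSum_nat_add_iff' 2).2 hs)
    ((hasSum_geometric_of_lt_one hr0 hr1).mul_left (C * r ^ 2))
  simp only [Finset.sum_range_succ, Finset.sum_range_zero] at this
  rw [mul_div_assoc, div_eq_mul_inv]
  linarith

lemma exp_neg_mul_one_add_add_le {a T : ℝ} (ha : 0 ≤ a) (hT : 0 ≤ T) :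
    exp (-a) * (1 + a + T) ≤ 1 + T := by
  have h1 : exp (-a) * exp a = 1 := by rw [← exp_add, neg_add_cancel, exp_zero]
  have h2 : exp (-a) ≤ 1 := exp_le_one_iff.2 (neg_nonpos.2 ha)
  nlinarith [add_one_le_exp a, exp_pos (-a)]

lemma one_add_sqrt_two_mul_sq_div_le_exp {u : ℝ} (hu0 : 0 ≤ u) (hu : u ≤ 1 / 4) :
    1 + √2 * (2 * u) ^ 2 / (1 - 2 * u) ≤ exp (10 * u ^ 2) := by
  have hsqrt : √2 ≤ 3 / 2 := by
    nlinarith [sq_sqrt (zero_le_two : (0 : ℝ) ≤ 2), sqrt_nonneg 2]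
  calc 1 + √2 * (2 * u) ^ 2 / (1 - 2 * u) ≤ 1 + 10 * u ^ 2 + (10 * u ^ 2) ^ 2 / 2 := by
        rw [add_assoc, add_le_add_iff_left, div_le_iff₀ (by linarith)]
        nlinarith [mul_nonneg (mul_nonneg hu0 hu0) (sub_nonneg.2 hu), sq_nonneg u]
    _ ≤ exp (10 * u ^ 2) := quadratic_le_exp_of_nonneg (by positivity)

section Integrals

variable {Ω : Type*} [MeasurableSpace Ω] {μ : Measure Ω}

lemma integrable_exp_mul_of_integrable_exp_mul_sq {X : Ω → ℝ} {l : ℝ}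
    (hX : AEMeasurable X μ) (hl : 0 < l) (h : Integrable (fun ω => exp (l * X ω ^ 2)) μ)
    (t : ℝ) :
    Integrable (fun ω => exp (t * X ω)) μ := by
  refine (h.const_mul (exp (t ^ 2 / (4 * l)))).mono'
    (hX.const_mul t).exp.aestronglyMeasurable (ae_of_all _ fun ω => ?_)
  rw [norm_of_nonneg (exp_pos _).le, ← exp_add, exp_le_exp, div_add' _ _ _ (by positivity),
    le_div_iff₀ (by positivity)]
  nlinarith [sq_nonneg (2 * l * X ω - t)]

lemma hasSum_integral_pow_div_factorial_of_nonneg {Y : Ω → ℝ} (hY : AEStronglyMeasurable Y μ)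
    (h0 : ∀ᵐ ω ∂μ, 0 ≤ Y ω) (hint : Integrable (fun ω => exp (Y ω)) μ) :
    HasSum (fun n => ∫ ω, Y ω ^ n / (n ! : ℝ) ∂μ) (∫ ω, exp (Y ω) ∂μ) := by
  have hexp (y : ℝ) : HasSum (fun n => y ^ n / n !) (exp y) := by
    rw [exp_eq_exp_ℝ]
    exact NormedSpace.expSeries_div_hasSum_exp y
  refine hasSum_integral_of_dominated_convergence (fun n ω => Y ω ^ n / n !)
    (fun n => by fun_prop) (fun n => h0.mono fun ω hω => ?_)
    (ae_of_all _ fun ω => (hexp _).summable) ?_ (ae_of_all _ fun ω => hexp _)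
  · exact (norm_of_nonneg (by positivity)).le
  · simpa only [(hexp _).tsum_eq] using hint

end Integrals

namespace ProbabilityTheory.HasSubgaussianMGF

variable {Ω : Type*} [MeasurableSpace Ω] {μ : Measure Ω} {X : Ω → ℝ} {c : ℝ≥0}

lemma integrable_pow (h : HasSubgaussianMGF X c μ) (n : ℕ) :
    Integrable (fun ω => X ω ^ n) μ :=
  integrable_pow_of_integrable_exp_mul one_ne_zero (h.integrable_exp_mul 1)
    (h.integrable_exp_mul (-1)) n

lemma pow_mul_integral_pow_two_mul_le (h : HasSubgaussianMGF X c μ) (a : ℝ) (k : ℕ) :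
    a ^ (2 * k) * ∫ ω, X ω ^ (2 * k) ∂μ ≤ (2 * k)! * exp (c * a ^ 2 / 2) := by
  have hint_neg : Integrable (fun ω => exp (-(a * X ω))) μ := by
    simpa using h.integrable_exp_mul (-a)
  have hcosh (ω : Ω) : a ^ (2 * k) / (2 * k)! * X ω ^ (2 * k) ≤ cosh (a * X ω) := by
    simpa [mul_pow, div_mul_eq_mul_div] using pow_two_mul_div_factorial_le_cosh (a * X ω) k
  have hmgf : ∫ ω, cosh (a * X ω) ∂μ = (mgf X μ a + mgf X μ (-a)) / 2 := by
    simp only [cosh_eq, mgf, neg_mul]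
    rw [integral_div, integral_add (h.integrable_exp_mul a) hint_neg]
  have hbound : (mgf X μ a + mgf X μ (-a)) / 2 ≤ exp (c * a ^ 2 / 2) := by
    linarith [h.mgf_le a, neg_sq a ▸ h.mgf_le (-a)]
  have hint_cosh : Integrable (fun ω => cosh (a * X ω)) μ := by
    simp only [cosh_eq]
    exact ((h.integrable_exp_mul a).add hint_neg).div_const 2
  have := (integral_mono ((h.integrable_pow _).const_mul _) hint_cosh hcosh).trans
    (hmgf.trans_le hbound)
  rw [integral_const_mul, div_mul_eq_mul_div, div_le_iff₀ (by positivity)] at this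
  linarith

lemma integral_pow_two_mul_le (h : HasSubgaussianMGF X c μ) (hc : 0 < c) (k : ℕ) :
    ∫ ω, X ω ^ (2 * k) ∂μ ≤ √2 * k ! * (2 * c) ^ k := by
  rcases Nat.eq_zero_or_pos k with rfl | hk
  · calc ∫ ω, X ω ^ (2 * 0) ∂μ = mgf X μ 0 := by simp [mgf]
      _ ≤ 1 := by simpa using h.mgf_le 0
      _ ≤ √2 * (0 ! : ℝ) * (2 * c) ^ 0 := by simp [one_le_sqrt]
  have hc' : (0 : ℝ) < c := hc
  -- `a² = 2k / c` minimises `exp (c a² / 2) / a^{2k}`.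
  have ha : √(2 * k / c) ^ (2 * k) = (2 * k / c) ^ k := by
    rw [pow_mul, sq_sqrt (by positivity)]
  have hexp : exp (c * √(2 * k / c) ^ 2 / 2) = exp 1 ^ k := by
    rw [sq_sqrt (by positivity), exp_one_pow]
    congr 1
    field_simp
  have key := h.pow_mul_integral_pow_two_mul_le (√(2 * k / c)) k
  rw [ha, hexp] at key
  have hpos : (0 : ℝ) < (2 * k / c) ^ k := by positivity
  rw [← le_div_iff₀' hpos] at key
  calc _ ≤ _ := key
    _ ≤ √2 * 2 ^ k * k ! * (2 * k) ^ k / (2 * k / c) ^ k :=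
      div_le_div_of_nonneg_right (factorial_two_mul_mul_exp_one_pow_le k) hpos.le
    _ = √2 * k ! * (2 * c) ^ k := by
      rw [div_pow, mul_pow, mul_pow]
      field_simp

lemma integral_exp_mul_sq_le [IsProbabilityMeasure μ] (h : HasSubgaussianMGF X c μ) (hc : 0 < c)
    {l : ℝ} (hl0 : 0 ≤ l) (hl1 : 2 * l * c < 1)
    (hint : Integrable (fun ω => exp (l * X ω ^ 2)) μ) :
    ∫ ω, exp (l * X ω ^ 2) ∂μ
      ≤ 1 + l * ∫ ω, X ω ^ 2 ∂μ + √2 * (2 * l * c) ^ 2 / (1 - 2 * l * c) := by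
  have hs := hasSum_integral_pow_div_factorial_of_nonneg (Y := fun ω => l * X ω ^ 2)
    (by have := h.aestronglyMeasurable; fun_prop) (ae_of_all _ fun ω => by positivity) hint
  have hterm (n : ℕ) :
      ∫ ω, (l * X ω ^ 2) ^ n / (n ! : ℝ) ∂μ
        = l ^ n * (∫ ω, X ω ^ (2 * n) ∂μ) / n ! := by
    simp_rw [mul_pow, ← pow_mul, mul_comm 2 n]
    rw [integral_div, integral_const_mul]
  refine (hs.le_add_add_of_le_geometric (C := √2) (by positivity) hl1 fun n => ?_).trans_eq ?_
  · rw [hterm, div_le_iff₀ (by positivity)]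
    calc l ^ (n + 2) * ∫ ω, X ω ^ (2 * (n + 2)) ∂μ
        ≤ l ^ (n + 2) * (√2 * (n + 2) ! * (2 * c) ^ (n + 2)) := by
          gcongr
          exact h.integral_pow_two_mul_le hc _
      _ = _ := by ring
  · simp [integral_const_mul]

lemma integral_exp_mul_sq_sub_integral_le [IsProbabilityMeasure μ] (h : HasSubgaussianMGF X c μ)
    (hc : 0 < c) {l : ℝ} (hl0 : 0 ≤ l) (hl1 : l * c ≤ 1 / 4)
    (hint : Integrable (fun ω => exp (l * X ω ^ 2)) μ) :
    ∫ ω, exp (l * (X ω ^ 2 - ∫ ω', X ω' ^ 2 ∂μ)) ∂μ ≤ exp (10 * (l * c) ^ 2) := by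
  set m := ∫ ω, X ω ^ 2 ∂μ
  have hm : 0 ≤ l * m := mul_nonneg hl0 (integral_nonneg fun ω => sq_nonneg _)
  have hmgf_sq := h.integral_exp_mul_sq_le hc hl0 (by linarith) hint
  calc ∫ ω, exp (l * (X ω ^ 2 - m)) ∂μ
        = exp (-(l * m)) * ∫ ω, exp (l * X ω ^ 2) ∂μ := by
        rw [← integral_const_mul]
        congr with ω
        rw [← exp_add]
        ring_nf
    _ ≤ exp (-(l * m)) * (1 + l * m + √2 * (2 * (l * c)) ^ 2 / (1 - 2 * (l * c))) := by
        rw [← mul_assoc 2 l]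
        gcongr
    _ ≤ 1 + √2 * (2 * (l * c)) ^ 2 / (1 - 2 * (l * c)) :=
        exp_neg_mul_one_add_add_le hm (div_nonneg (by positivity) (by linarith))
    _ ≤ exp (10 * (l * c) ^ 2) := one_add_sqrt_two_mul_sq_div_le_exp (by positivity) hl1

end ProbabilityTheory.HasSubgaussianMGF

theorem subGaussian_square_mgf_bound_general
    {Ω : Type*} [MeasurableSpace Ω] (μ : Measure Ω) [IsProbabilityMeasure μ]
    (σ : ℝ) (hσ : 0 < σ) (X : Ω → ℝ) (hXmeas : Measurable X)
    (hsubG : ∀ l : ℝ, ∫ ω, Real.exp (l * X ω) ∂μ ≤ Real.exp (l^2 * σ^2 / 2))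
    (l : ℝ) (hl0 : 0 ≤ l) (hl1 : l ≤ 1 / (4 * σ^2)) :
    ∫ ω, Real.exp (l * (X ω ^ 2 - ∫ ω', X ω' ^ 2 ∂μ)) ∂μ
      ≤ Real.exp (10 * l^2 * σ^4) := by
  obtain rfl | hl := hl0.eq_or_lt
  · simp
  set m := ∫ ω, X ω ^ 2 ∂μ
  -- `hsubG` alone says nothing about integrability (a non-integrable `exp (t X)` has integral
  -- `0`); it comes from that of `exp (l X²)`, and without it the left-hand side is `0`.
  by_cases hint : Integrable (fun ω => exp (l * (X ω ^ 2 - m))) μ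
  swap
  · rw [integral_undef hint]
    positivity
  have hint_sq : Integrable (fun ω => exp (l * X ω ^ 2)) μ := by
    convert hint.mul_const (exp (l * m)) using 2 with ω
    rw [← exp_add]
    ring_nf
  set c : ℝ≥0 := σ.toNNReal ^ 2
  have hc : (c : ℝ) = σ ^ 2 := by simp [c, hσ.le]
  have hX : HasSubgaussianMGF X c μ :=
    ⟨integrable_exp_mul_of_integrable_exp_mul_sq hXmeas.aemeasurable hl hint_sq,
      fun t => (hsubG t).trans_eq (by rw [hc]; ring_nf)⟩
  have hlc : l * c ≤ 1 / 4 := by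
    rw [le_div_iff₀ (by positivity)] at hl1
    rw [hc]
    linarith
  calc _ ≤ exp (10 * (l * c) ^ 2) :=
        hX.integral_exp_mul_sq_sub_integral_le (by positivity) hl.le hlc hint_sq
    _ = exp (10 * l ^ 2 * σ ^ 4) := by rw [hc]; ring_nf

theorem subGaussian_square_mgf_bound
    {Ω : Type*} [MeasurableSpace Ω] (μ : Measure Ω) [IsProbabilityMeasure μ]
    (σ : ℝ) (hσ : 0 < σ) (X : Ω → ℝ) (hXmeas : Measurable X)
    (hcent : ∫ ω, X ω ∂μ = 0)
    (hsubG : ∀ l : ℝ, ∫ ω, Real.exp (l * X ω) ∂μ ≤ Real.exp (l^2 * σ^2 / 2))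
    (l : ℝ) (hl0 : 0 ≤ l) (hl1 : l ≤ 1 / (4 * σ^2)) :
    ∫ ω, Real.exp (l * (X ω ^ 2 - ∫ ω', X ω' ^ 2 ∂μ)) ∂μ
      ≤ Real.exp (10 * l^2 * σ^4) :=
  subGaussian_square_mgf_bound_general μ σ hσ X hXmeas hsubG l hl0 hl1
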